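/- arXiv:2003.07841 — 2 statements merged into one kernel-verified Lean document; each statement's English description precedes it below -/
import Mathlib

section
/- For any two symmetric positive semi-definite N×N real matrices A and B, the operator norm of √A − √B is at most the square root of the operator norm of A − B, where √A denotes the unique symmetric positive semi-definite square root. -/
open MeasureTheory Matrix Filter

/-- Operator norm of a real `N × N` matrix, acting on Euclidean space. -/
noncomputable def matOpNorm {N : ℕ} (A : Matrix (Fin N) (Fin N) ℝ) : ℝ :=
  ‖(Matrix.toEuclideanCLM (𝕜 := ℝ) A : EuclideanSpace ℝ (Fin N) →L[ℝ] EuclideanSpace ℝ (Fin N))‖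

/-- The matrix `E(x)` with entries `exp (-|x i - x j|)`. -/
noncomputable def Emat {N : ℕ} (x : EuclideanSpace ℝ (Fin N)) : Matrix (Fin N) (Fin N) ℝ :=
  Matrix.of fun i j => Real.exp (-|x i - x j|)

/-- The positive semidefinite square root of a positive semidefinite matrix
(the definition of `Matrix.PosSemidef.sqrt` in the older Mathlib, since removed). -/
noncomputable def Matrix.PosSemidef.sqrt {N : ℕ} {A : Matrix (Fin N) (Fin N) ℝ}
    (hA : A.PosSemidef) : Matrix (Fin N) (Fin N) ℝ :=
  hA.1.eigenvectorUnitary.1 * diagonal ((↑) ∘ (Real.sqrt ·) ∘ hA.1.eigenvalues) *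
  (star hA.1.eigenvectorUnitary : Matrix (Fin N) (Fin N) ℝ)

open scoped RealInnerProductSpace

lemma Matrix.PosSemidef.posSemidef_sqrt {N : ℕ} {A : Matrix (Fin N) (Fin N) ℝ}
    (hA : A.PosSemidef) : hA.sqrt.PosSemidef :=
  (PosSemidef.diagonal (fun _ => Real.sqrt_nonneg _)).mul_mul_conjTranspose_same _

lemma Matrix.PosSemidef.sqrt_mul_self {N : ℕ} {A : Matrix (Fin N) (Fin N) ℝ}
    (hA : A.PosSemidef) : hA.sqrt * hA.sqrt = A := by
  have hU : (star hA.1.eigenvectorUnitary : Matrix (Fin N) (Fin N) ℝ) *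
      hA.1.eigenvectorUnitary.1 = 1 := Unitary.star_mul_self_of_mem hA.1.eigenvectorUnitary.2
  have hd : diagonal (((↑) ∘ (Real.sqrt ·) ∘ hA.1.eigenvalues : Fin N → ℝ)) *
      diagonal (((↑) ∘ (Real.sqrt ·) ∘ hA.1.eigenvalues : Fin N → ℝ)) =
      diagonal (RCLike.ofReal ∘ hA.1.eigenvalues) := by
    rw [diagonal_mul_diagonal]
    congr 1; funext i
    simp [Real.mul_self_sqrt (hA.eigenvalues_nonneg i)]
  conv_rhs => rw [hA.1.spectral_theorem, Unitary.conjStarAlgAut_apply]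
  unfold Matrix.PosSemidef.sqrt
  rw [← hd]
  simp only [Matrix.mul_assoc]
  rw [← Matrix.mul_assoc _ _ (diagonal _ * _), hU, Matrix.one_mul]


lemma inner_nonneg_of_psd {N : ℕ} {M : Matrix (Fin N) (Fin N) ℝ} (hM : M.PosSemidef)
    (x : EuclideanSpace ℝ (Fin N)) : 0 ≤ ⟪x, Matrix.toEuclideanCLM (𝕜 := ℝ) M x⟫ := by
  obtain ⟨y, rfl⟩ := (WithLp.equiv 2 (Fin N → ℝ)).symm.surjective x
  change 0 ≤ ⟪WithLp.toLp 2 y, Matrix.toEuclideanCLM (𝕜 := ℝ) M (WithLp.toLp 2 y)⟫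
  rw [Matrix.toEuclideanCLM_toLp, EuclideanSpace.inner_toLp_toLp]
  simpa [dotProduct_comm] using (posSemidef_iff_dotProduct_mulVec.mp hM).2 y

lemma eig_sq_le {N : ℕ} (A B : Matrix (Fin N) (Fin N) ℝ)
    (hA : A.PosSemidef) (hB : B.PosSemidef) {μ : ℝ} (hμ : 0 ≤ μ)
    {v : EuclideanSpace ℝ (Fin N)} (hv : ‖v‖ = 1)
    (hev : Matrix.toEuclideanCLM (𝕜 := ℝ) (hA.sqrt - hB.sqrt) v = μ • v) :
    μ ^ 2 ≤ ‖(Matrix.toEuclideanCLM (𝕜 := ℝ) (A - B) :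
      EuclideanSpace ℝ (Fin N) →L[ℝ] EuclideanSpace ℝ (Fin N))‖ := by
  set g := Matrix.toEuclideanCLM (𝕜 := ℝ) (n := Fin N) with hg
  set D := hA.sqrt - hB.sqrt with hD
  -- symmetry of g D
  have hDh : D.IsHermitian := hA.posSemidef_sqrt.1.sub hB.posSemidef_sqrt.1
  have hsym : ∀ x y : EuclideanSpace ℝ (Fin N), ⟪g D x, y⟫ = ⟪x, g D y⟫ := by
    have := (Matrix.isHermitian_iff_isSymmetric.mp hDh)
    intro x y
    have h2 := this x y
    rwa [← Matrix.coe_toEuclideanCLM_eq_toEuclideanLin] at h2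
  -- inner products with sqrt matrices
  have ha : (0:ℝ) ≤ ⟪v, g hA.sqrt v⟫ := inner_nonneg_of_psd hA.posSemidef_sqrt v
  have hb : (0:ℝ) ≤ ⟪v, g hB.sqrt v⟫ := inner_nonneg_of_psd hB.posSemidef_sqrt v
  -- key algebraic identity: A - B = √A * D + D * √B
  have hkey : A - B = hA.sqrt * D + D * hB.sqrt := by
    rw [hD, mul_sub, sub_mul, hA.sqrt_mul_self, hB.sqrt_mul_self]
    noncomm_ring
  have hgkey : g (A - B) = g hA.sqrt * g D + g D * g hB.sqrt := by
    rw [hkey, map_add, _root_.map_mul, _root_.map_mul]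
  have hinner : ⟪v, g (A - B) v⟫ = μ * ⟪v, g hA.sqrt v⟫ + μ * ⟪v, g hB.sqrt v⟫ := by
    rw [hgkey]
    simp only [ContinuousLinearMap.add_apply, ContinuousLinearMap.mul_apply, inner_add_right]
    rw [hev]
    congr 1
    · rw [(g hA.sqrt).map_smul, inner_smul_right]
    · rw [← hsym v (g hB.sqrt v), hev, real_inner_smul_left]
  have h2 : μ ^ 2 ≤ ⟪v, g (A - B) v⟫ := by
    have hμv : μ * ⟪v, g D v⟫ = μ ^ 2 := by
      rw [hev, real_inner_smul_right, real_inner_self_eq_norm_sq, hv]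
      ring
    have hsplit : ⟪v, g D v⟫ = ⟪v, g hA.sqrt v⟫ - ⟪v, g hB.sqrt v⟫ := by
      rw [hD, map_sub]
      simp [inner_sub_right]
    rw [hinner, ← hμv, hsplit]
    nlinarith
  refine h2.trans ?_
  calc ⟪v, g (A - B) v⟫ ≤ ‖v‖ * ‖g (A - B) v‖ := real_inner_le_norm _ _
    _ ≤ ‖v‖ * (‖g (A - B)‖ * ‖v‖) := by
        gcongr; exact (g (A - B)).le_opNorm v
    _ = ‖g (A - B)‖ := by rw [hv]; ring

open Matrix
open scoped RealInnerProductSpace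

lemma norm_le_of_eig {N : ℕ} (T : EuclideanSpace ℝ (Fin N) →L[ℝ] EuclideanSpace ℝ (Fin N))
    (hT : IsSelfAdjoint T) {c : ℝ} (hc : 0 ≤ c)
    (h : ∀ (μ : ℝ) (v : EuclideanSpace ℝ (Fin N)), ‖v‖ = 1 → T v = μ • v → μ ^ 2 ≤ c ^ 2) :
    ‖T‖ ≤ c := by
  have hSym : (T : EuclideanSpace ℝ (Fin N) →ₗ[ℝ] EuclideanSpace ℝ (Fin N)).IsSymmetric :=
    ContinuousLinearMap.isSelfAdjoint_iff_isSymmetric.mp hT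
  have hfin : Module.finrank ℝ (EuclideanSpace ℝ (Fin N)) = N := finrank_euclideanSpace_fin
  set b := hSym.eigenvectorBasis hfin with hb
  refine T.opNorm_le_bound hc fun x => ?_
  have key : ∀ y : EuclideanSpace ℝ (Fin N), ‖y‖ ^ 2 = ∑ i, (b.repr y i) ^ 2 := by
    intro y
    rw [← b.repr.norm_map y, EuclideanSpace.norm_eq, Real.sq_sqrt (by positivity)]
    simp [sq_abs]
  have hrepr : ∀ i, b.repr (T x) i = hSym.eigenvalues hfin i * b.repr x i := by
    intro i
    have hs := hSym (b i) x
    simp only [ContinuousLinearMap.coe_coe] at hs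
    have hev : T (b i) = hSym.eigenvalues hfin i • b i := hSym.apply_eigenvectorBasis hfin i
    rw [b.repr_apply_apply, b.repr_apply_apply, ← hs, hev, real_inner_smul_left]
  have h1 : ‖T x‖ ^ 2 ≤ c ^ 2 * ‖x‖ ^ 2 := by
    rw [key (T x), key x, Finset.mul_sum]
    refine Finset.sum_le_sum fun i _ => ?_
    rw [hrepr i, mul_pow]
    have := h (hSym.eigenvalues hfin i) (b i) (b.orthonormal.1 i)
      (hSym.apply_eigenvectorBasis hfin i)
    nlinarith [sq_nonneg (b.repr x i)]
  calc ‖T x‖ = Real.sqrt (‖T x‖ ^ 2) := (Real.sqrt_sq (norm_nonneg _)).symm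
    _ ≤ Real.sqrt (c ^ 2 * ‖x‖ ^ 2) := Real.sqrt_le_sqrt h1
    _ = c * ‖x‖ := by rw [← mul_pow, Real.sqrt_sq (by positivity)]


/-- For symmetric positive semidefinite matrices `A`, `B`,
`‖√A − √B‖ ≤ √‖A − B‖` in the operator norm. -/
theorem stmt0 {N : ℕ} (A B : Matrix (Fin N) (Fin N) ℝ)
    (hA : A.PosSemidef) (hB : B.PosSemidef) :
    matOpNorm (hA.sqrt - hB.sqrt) ≤ Real.sqrt (matOpNorm (A - B)) := by
  set g := Matrix.toEuclideanCLM (𝕜 := ℝ) (n := Fin N) with hg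
  have hDh : (hA.sqrt - hB.sqrt).IsHermitian := hA.posSemidef_sqrt.1.sub hB.posSemidef_sqrt.1
  have hsa : IsSelfAdjoint (g (hA.sqrt - hB.sqrt)) := by
    have hst : star (hA.sqrt - hB.sqrt) = hA.sqrt - hB.sqrt := hDh.isSelfAdjoint
    show star _ = _
    rw [← map_star, hst]
  have hnn : (0:ℝ) ≤ matOpNorm (A - B) := norm_nonneg _
  have hc : (0:ℝ) ≤ Real.sqrt (matOpNorm (A - B)) := Real.sqrt_nonneg _
  refine norm_le_of_eig _ hsa hc fun μ v hv hev => ?_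
  rw [Real.sq_sqrt hnn]
  rcases le_or_gt 0 μ with hμ | hμ
  · exact eig_sq_le A B hA hB hμ hv hev
  · have hev' : g (hB.sqrt - hA.sqrt) v = (-μ) • v := by
      rw [show hB.sqrt - hA.sqrt = -(hA.sqrt - hB.sqrt) from (neg_sub _ _).symm,
        map_neg, ContinuousLinearMap.neg_apply, hev, neg_smul]
    have h3 := eig_sq_le B A hB hA (by linarith) hv hev'
    rw [show B - A = -(A - B) from (neg_sub _ _).symm, map_neg, norm_neg] at h3
    show μ ^ 2 ≤ ‖(g (A - B) : EuclideanSpace ℝ (Fin N) →L[ℝ] EuclideanSpace ℝ (Fin N))‖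
    calc μ ^ 2 = (-μ) ^ 2 := by ring
      _ ≤ _ := h3
end

section
/- Let v₀ : ℝ → ℝ be defined by v₀(y) = −1 for y ≤ −2, v₀(y) = (1/4) sgn(y) y² for −2 < y < 2, and v₀(y) = 1 for y ≥ 2. Then for −2 < x ≤ 0 and t > 2, the Hopf–Lax value v(x,t) = min_{y∈ℝ} ( v₀(y) + (x−y)²/(2t) ) equals (x+2)²/(2t) − 1. -/
/-- The initial datum `v₀` in the one-dimensional example. -/
noncomputable def v₀ (y : ℝ) : ℝ :=
  if y ≤ -2 then -1 else if y < 2 then (1 / 4) * Real.sign y * y ^ 2 else 1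

/-- For `−2 < x ≤ 0` and `t > 2`, the Hopf–Lax value
`min_y (v₀(y) + (x−y)²/(2t))` equals `(x+2)²/(2t) − 1` (and the minimum is attained). -/
theorem stmt15 (x t : ℝ) (hx1 : -2 < x) (hx2 : x ≤ 0) (ht : 2 < t) :
    IsLeast {r : ℝ | ∃ y : ℝ, r = v₀ y + (x - y) ^ 2 / (2 * t)}
      ((x + 2) ^ 2 / (2 * t) - 1) := by
  have h2t : (0:ℝ) < 2 * t := by linarith
  constructor
  · refine ⟨-2, ?_⟩
    have : v₀ (-2) = -1 := by simp [v₀]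
    rw [this]
    ring_nf
  · rintro r ⟨y, rfl⟩
    suffices h : (x + 2) ^ 2 - (x - y) ^ 2 ≤ (v₀ y + 1) * (2 * t) by
      have h2 : ((x + 2) ^ 2 - (x - y) ^ 2) / (2 * t) ≤ v₀ y + 1 :=
        (div_le_iff₀ h2t).mpr h
      rw [sub_div] at h2
      linarith
    unfold v₀
    split_ifs with h1 h2
    · -- y ≤ -2 : need (x+2)^2 ≤ (x-y)^2
      nlinarith [sq_nonneg (x - y), sq_nonneg (x + 2)]
    · -- -2 < y < 2
      rcases lt_trichotomy y 0 with hy | hy | hy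
      · rw [Real.sign_of_neg hy]
        push_neg at h1
        have ha : (0:ℝ) ≤ (t - 2) * (2 - y) := by
          apply mul_nonneg <;> linarith
        have hb : (0:ℝ) ≤ t * (2 - y) - 2 * (2 * x + 2 - y) := by nlinarith
        nlinarith [mul_nonneg (by linarith : (0:ℝ) ≤ 2 + y) hb]
      · subst hy
        simp only [Real.sign_zero]
        nlinarith [sq_nonneg (x - 0), sq_nonneg (x + 2)]
      · rw [Real.sign_of_pos hy]
        nlinarith [sq_nonneg (x - y), sq_nonneg y, sq_nonneg (x + 2)]
    · -- y ≥ 2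
      nlinarith [sq_nonneg (x - y), sq_nonneg (x + 2)]
end
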